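/- arXiv:1203.0290 — 5 statements merged into one kernel-verified Lean document; each statement's English description precedes it below -/
import Mathlib

section
/- For a 2-form λ on an m-dimensional vector space V over a field F (of arbitrary characteristic), define Pf_0(λ) = 1 and inductively require that Pf_k(λ) ∈ ⋀^{2k} V* satisfies ι_v Pf_k(λ) = (ι_v λ) ∧ Pf_{k-1}(λ) for all v ∈ V. Then for each k ≥ 1 there exists a unique element Pf_k(λ) ∈ ⋀^{2k} V* satisfying this equation. -/
open ExteriorAlgebra

/-- Interior multiplication `ι_v` of a form (an element of the exterior algebra of the
dual space) by a vector `v`, characterized by `⟨ι_v α, β⟩ = ⟨α, v ∧ β⟩`. -/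
noncomputable def iMul (F : Type*) [Field F] {V : Type*} [AddCommGroup V] [Module F V] (v : V) :
    ExteriorAlgebra F (Module.Dual F V) →ₗ[F] ExteriorAlgebra F (Module.Dual F V) :=
  CliffordAlgebra.contractLeft (Module.Dual.eval F V v)

/-!
Write the 2-form as a sum of decomposables `a ∧ b`. For a single `a ∧ b` the powers
`(a ∧ b) ^ k` form a Pfaffian sequence (they vanish from `k = 2` on), and Pfaffian sequences
`P`, `Q` of `x`, `y` give the Cauchy product `∑_{i+j=k} P i ∧ Q j` for `x + y`: even forms are
central and fixed by the grade involution, so contraction is an ordinary derivation on them.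
No factorials are divided by, so this works in every characteristic.

Uniqueness reduces to: a form of positive degree all of whose contractions vanish is zero.
Write it as `y + e ∧ z` with `y`, `z` generated by the remaining vectors of a basis; contracting
with the coordinate of `e` gives `z = 0`, and peeling off the basis vectors one at a time leaves
a scalar.
-/

namespace ExteriorAlgebra

open CliffordAlgebra Finset

variable {R : Type*} [CommRing R] {M : Type*} [AddCommGroup M] [Module R M]

local infixl:70 "⌋" => contractLeft

theorem ι_mul_eq_involute_mul (m : M) (x : ExteriorAlgebra R M) :
    ι R m * x = involute x * ι R m := by
  induction x using ExteriorAlgebra.induction with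
  | algebraMap r => rw [AlgHom.commutes, Algebra.commutes]
  | ι n => rw [involute_ι, neg_mul, eq_neg_iff_add_eq_zero, ι_add_mul_swap]
  | mul a b ha hb => rw [← mul_assoc, ha, mul_assoc, hb, ← mul_assoc, map_mul]
  | add a b ha hb => rw [mul_add, ha, hb, map_add, add_mul]

theorem contractLeft_mul (d : Module.Dual R M) (x y : ExteriorAlgebra R M) :
    d⌋(x * y) = d⌋x * y + involute x * (d⌋y) := by
  induction x using ExteriorAlgebra.induction generalizing y with
  | algebraMap r =>
    rw [contractLeft_algebraMap_mul, contractLeft_algebraMap, AlgHom.commutes, zero_mul, zero_add]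
  | ι n =>
    rw [contractLeft_ι_mul, contractLeft_ι, involute_ι, Algebra.smul_def, neg_mul, sub_eq_add_neg]
  | mul a b ha hb =>
    rw [mul_assoc, ha, hb, ha, map_mul]
    noncomm_ring
  | add a b ha hb => rw [add_mul, map_add, ha, hb, map_add, map_add]; noncomm_ring

theorem involute_eq_self_of_mem_exteriorPower {n : ℕ} (hn : Even n) {x : ExteriorAlgebra R M}
    (hx : x ∈ ⋀[R]^n M) : involute x = x :=
  -- `evenOdd 0` is by definition the supremum of the even powers `⋀[R]^n M`
  involute_eq_of_mem_even <|
    le_iSup (fun j : { k : ℕ // (k : ZMod 2) = 0 } => ⋀[R]^(j : ℕ) M)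
      ⟨n, (ZMod.natCast_eq_zero_iff_even).2 hn⟩ hx

theorem commute_of_involute_eq_self {x : ExteriorAlgebra R M} (hx : involute x = x)
    (y : ExteriorAlgebra R M) : Commute x y := by
  induction y using ExteriorAlgebra.induction with
  | algebraMap r => exact (Algebra.commutes r x).symm
  | ι m => exact ((ι_mul_eq_involute_mul m x).trans (by rw [hx])).symm
  | mul a b ha hb => exact ha.mul_right hb
  | add a b ha hb => exact ha.add_right hb

theorem involute_mem_adjoin_image {s : Set M} {x : ExteriorAlgebra R M}
    (hx : x ∈ Algebra.adjoin R (ι R '' s)) : involute x ∈ Algebra.adjoin R (ι R '' s) := by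
  induction hx using Algebra.adjoin_induction with
  | mem y hy =>
    obtain ⟨m, hm, rfl⟩ := hy
    rw [involute_ι]
    exact neg_mem (Algebra.subset_adjoin ⟨m, hm, rfl⟩)
  | algebraMap r => rw [AlgHom.commutes]; exact algebraMap_mem _ r
  | add a b _ _ ha hb => rw [map_add]; exact add_mem ha hb
  | mul a b _ _ ha hb => rw [map_mul]; exact mul_mem ha hb

theorem exists_eq_add_ι_mul_of_mem_adjoin_insert {s : Set M} {m : M} {x : ExteriorAlgebra R M}
    (hx : x ∈ Algebra.adjoin R (ι R '' insert m s)) :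
    ∃ y ∈ Algebra.adjoin R (ι R '' s), ∃ z ∈ Algebra.adjoin R (ι R '' s), x = y + ι R m * z := by
  induction hx using Algebra.adjoin_induction with
  | mem u hu =>
    obtain ⟨n, hn | hn, rfl⟩ := hu
    · exact ⟨0, zero_mem _, 1, one_mem _, by rw [hn, zero_add, mul_one]⟩
    · exact ⟨ι R n, Algebra.subset_adjoin ⟨n, hn, rfl⟩, 0, zero_mem _, by simp⟩
  | algebraMap r => exact ⟨algebraMap R _ r, algebraMap_mem _ r, 0, zero_mem _, by simp⟩
  | add a b _ _ ha hb =>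
    obtain ⟨y₁, hy₁, z₁, hz₁, rfl⟩ := ha
    obtain ⟨y₂, hy₂, z₂, hz₂, rfl⟩ := hb
    exact ⟨y₁ + y₂, add_mem hy₁ hy₂, z₁ + z₂, add_mem hz₁ hz₂, by noncomm_ring⟩
  | mul a b _ _ ha hb =>
    obtain ⟨y₁, hy₁, z₁, hz₁, rfl⟩ := ha
    obtain ⟨y₂, hy₂, z₂, hz₂, rfl⟩ := hb
    refine ⟨y₁ * y₂, mul_mem hy₁ hy₂, involute y₁ * z₂ + z₁ * y₂,
      add_mem (mul_mem (involute_mem_adjoin_image hy₁) hz₂) (mul_mem hz₁ hy₂), ?_⟩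
    have h_swap : ∀ u, u * ι R m = ι R m * involute u := fun u => by
      rw [ι_mul_eq_involute_mul, involute_involute]
    have h_sq : ι R m * z₁ * (ι R m * z₂) = 0 := by
      rw [mul_assoc, ← mul_assoc z₁, h_swap, ← mul_assoc, ← mul_assoc, ι_sq_zero, zero_mul,
        zero_mul]
    calc (y₁ + ι R m * z₁) * (y₂ + ι R m * z₂)
        = y₁ * y₂ + y₁ * ι R m * z₂ + ι R m * z₁ * y₂ + ι R m * z₁ * (ι R m * z₂) := by
          noncomm_ring
      _ = y₁ * y₂ + ι R m * (involute y₁ * z₂ + z₁ * y₂) := by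
          rw [h_sq, h_swap]; noncomm_ring

theorem contractLeft_eq_zero_of_mem_adjoin {s : Set M} {d : Module.Dual R M}
    (hd : ∀ m ∈ s, d m = 0) {x : ExteriorAlgebra R M} (hx : x ∈ Algebra.adjoin R (ι R '' s)) :
    d⌋x = 0 := by
  induction hx using Algebra.adjoin_induction with
  | mem y hy =>
    obtain ⟨m, hm, rfl⟩ := hy
    rw [contractLeft_ι, hd m hm, map_zero]
  | algebraMap r => exact contractLeft_algebraMap _ d r
  | add a b _ _ ha hb => rw [map_add, ha, hb, add_zero]
  | mul a b _ _ ha hb => rw [contractLeft_mul, ha, hb, zero_mul, mul_zero, add_zero]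

theorem mem_bot_of_mem_adjoin_basis_of_forall_contractLeft_eq_zero {κ : Type*}
    (b : Module.Basis κ R M) (t : Finset κ) {x : ExteriorAlgebra R M}
    (hx : x ∈ Algebra.adjoin R (ι R '' (b '' t))) (hd : ∀ d : Module.Dual R M, d⌋x = 0) :
    x ∈ (⊥ : Subalgebra R (ExteriorAlgebra R M)) := by
  classical
  induction t using Finset.induction_on generalizing x with
  | empty => simpa using hx
  | insert i t hi ih =>
    rw [coe_insert, Set.image_insert_eq] at hx
    obtain ⟨y, hy, z, hz, rfl⟩ := exists_eq_add_ι_mul_of_mem_adjoin_insert hx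
    have h_coord : ∀ m ∈ b '' t, b.coord i m = 0 := by
      rintro _ ⟨j, hj, rfl⟩
      rw [Module.Basis.coord_apply, Module.Basis.repr_self,
        Finsupp.single_eq_of_ne (ne_of_mem_of_not_mem hj hi).symm]
    have hz0 : z = 0 := by
      simpa [contractLeft_eq_zero_of_mem_adjoin h_coord hy,
        contractLeft_eq_zero_of_mem_adjoin h_coord hz, contractLeft_ι_mul] using hd (b.coord i)
    rw [hz0, mul_zero, add_zero] at hd ⊢
    exact ih hy hd

theorem adjoin_ι_image_range_basis {κ : Type*} (b : Module.Basis κ R M) :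
    Algebra.adjoin R (ι R '' Set.range b) = ⊤ := by
  rw [eq_top_iff, ← CliffordAlgebra.adjoin_range_ι]
  refine Algebra.adjoin_le fun _ ⟨m, hm⟩ => Algebra.span_le_adjoin R _ ?_
  rw [← hm, Submodule.span_image, b.span_eq]
  exact Submodule.mem_map_of_mem Submodule.mem_top

theorem eq_zero_of_mem_bot_of_mem_exteriorPower {n : ℕ} (hn : n ≠ 0) {x : ExteriorAlgebra R M}
    (hx : x ∈ ⋀[R]^n M) (h_bot : x ∈ (⊥ : Subalgebra R (ExteriorAlgebra R M))) : x = 0 := by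
  have h_zero : x ∈ ⋀[R]^0 M := by
    obtain ⟨r, rfl⟩ := Algebra.mem_bot.mp h_bot
    rw [exteriorPower, pow_zero]
    exact Submodule.algebraMap_mem r
  rw [← DirectSum.decompose_of_mem_same (fun i : ℕ => ⋀[R]^i M) h_zero]
  exact DirectSum.decompose_of_mem_ne (fun i : ℕ => ⋀[R]^i M) hx hn

theorem eq_zero_of_forall_contractLeft_eq_zero [Module.Free R M] [Module.Finite R M] {n : ℕ}
    (hn : n ≠ 0) {x : ExteriorAlgebra R M} (hx : x ∈ ⋀[R]^n M)
    (hd : ∀ d : Module.Dual R M, d⌋x = 0) : x = 0 := by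
  let b := Module.Free.chooseBasis R M
  have h_adjoin : x ∈ Algebra.adjoin R (ι R '' Set.range b) := by
    rw [adjoin_ι_image_range_basis]
    exact Algebra.mem_top
  exact eq_zero_of_mem_bot_of_mem_exteriorPower hn hx
    (mem_bot_of_mem_adjoin_basis_of_forall_contractLeft_eq_zero b univ (by simpa using h_adjoin) hd)

/-- `P k` plays the role of the divided power `x ^ k / k!` of a 2-form `x`, characterized by
contraction without dividing, so that it makes sense in every characteristic. -/
structure IsPfaffianSeq (x : ExteriorAlgebra R M) (P : ℕ → ExteriorAlgebra R M) : Prop where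
  zero : P 0 = 1
  mem : ∀ k, P k ∈ ⋀[R]^(2 * k) M
  contractLeft_succ : ∀ k (d : Module.Dual R M), d⌋P (k + 1) = d⌋x * P k

theorem isPfaffianSeq_ι_mul_ι (a b : M) :
    IsPfaffianSeq (ι R a * ι R b) fun k => (ι R a * ι R b) ^ k := by
  set μ := ι R a * ι R b
  have h_mem : μ ∈ ⋀[R]^2 M := by
    rw [exteriorPower, pow_two]
    exact Submodule.mul_mem_mul (LinearMap.mem_range_self _ a) (LinearMap.mem_range_self _ b)
  have h_a : ι R a * μ = 0 := by rw [← mul_assoc, ι_sq_zero, zero_mul]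
  have h_b : ι R b * μ = 0 := by
    rw [← mul_assoc, eq_neg_of_add_eq_zero_left (ι_add_mul_swap b a), neg_mul, mul_assoc,
      ι_sq_zero, mul_zero, neg_zero]
  have h_sq : μ * μ = 0 := by rw [mul_assoc, h_b, mul_zero]
  have h_contract : ∀ d : Module.Dual R M, d⌋μ * μ = 0 := fun d => by
    rw [contractLeft_ι_mul, contractLeft_ι, sub_mul, smul_mul_assoc, h_b, ← Algebra.commutes,
      mul_assoc]
    change _ - _ * (ι R a * μ) = 0
    rw [h_a, mul_zero, smul_zero, sub_zero]
  refine ⟨pow_zero μ, fun k => mul_comm k 2 ▸ SetLike.pow_mem_graded k h_mem, fun k d => ?_⟩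
  rcases k with _ | k
  · simp
  · rw [pow_succ' μ (k + 1), pow_succ' μ k, ← mul_assoc, h_sq, zero_mul, map_zero,
      ← mul_assoc, h_contract, zero_mul]

namespace IsPfaffianSeq

variable {x y : ExteriorAlgebra R M} {P Q : ℕ → ExteriorAlgebra R M}

theorem involute_eq (hP : IsPfaffianSeq x P) (k : ℕ) : involute (P k) = P k :=
  involute_eq_self_of_mem_exteriorPower (even_two_mul k) (hP.mem k)

theorem add (hP : IsPfaffianSeq x P) (hQ : IsPfaffianSeq y Q) :
    IsPfaffianSeq (x + y) fun k => ∑ p ∈ antidiagonal k, P p.1 * Q p.2 := by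
  refine ⟨by simp [hP.zero, hQ.zero], fun k => sum_mem fun p hp => ?_, fun k d => ?_⟩
  · rw [← mem_antidiagonal.mp hp, mul_add]
    exact SetLike.mul_mem_graded (hP.mem p.1) (hQ.mem p.2)
  · have h_left : ∑ p ∈ antidiagonal (k + 1), d⌋P p.1 * Q p.2 =
        d⌋x * ∑ p ∈ antidiagonal k, P p.1 * Q p.2 := by
      rw [Nat.sum_antidiagonal_succ, hP.zero, contractLeft_one, zero_mul, zero_add, mul_sum]
      simp only [hP.contractLeft_succ, mul_assoc]
    have h_right : ∑ p ∈ antidiagonal (k + 1), P p.1 * (d⌋Q p.2) =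
        d⌋y * ∑ p ∈ antidiagonal k, P p.1 * Q p.2 := by
      rw [Nat.sum_antidiagonal_succ', hQ.zero, contractLeft_one, mul_zero, zero_add, mul_sum]
      refine sum_congr rfl fun p _ => ?_
      rw [hQ.contractLeft_succ, ← mul_assoc, ← mul_assoc,
        (commute_of_involute_eq_self (hP.involute_eq p.1) _).eq]
    simp only [map_sum, contractLeft_mul, hP.involute_eq, sum_add_distrib, h_left, h_right,
      map_add, add_mul]

theorem unique [Module.Free R M] [Module.Finite R M] (hP : IsPfaffianSeq x P)
    (hQ : IsPfaffianSeq x Q) : P = Q := by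
  funext k
  induction k with
  | zero => rw [hP.zero, hQ.zero]
  | succ k ih =>
    refine sub_eq_zero.mp (eq_zero_of_forall_contractLeft_eq_zero (by omega : 2 * (k + 1) ≠ 0)
      (sub_mem (hP.mem _) (hQ.mem _)) fun d => ?_)
    rw [map_sub, hP.contractLeft_succ, hQ.contractLeft_succ, ih, sub_self]

end IsPfaffianSeq

theorem exists_isPfaffianSeq {x : ExteriorAlgebra R M} (hx : x ∈ ⋀[R]^2 M) :
    ∃ P, IsPfaffianSeq x P := by
  rw [exteriorPower, pow_two] at hx
  refine Submodule.mul_induction_on hx ?_ fun u v ⟨P, hP⟩ ⟨Q, hQ⟩ => ⟨_, hP.add hQ⟩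
  rintro _ ⟨a, rfl⟩ _ ⟨b, rfl⟩
  exact ⟨_, isPfaffianSeq_ι_mul_ι a b⟩

end ExteriorAlgebra

theorem pfaffian_existence_uniqueness_general (F : Type*) [Field F] (V : Type*) [AddCommGroup V]
    [Module F V] [FiniteDimensional F V]
    (lam : ExteriorAlgebra F (Module.Dual F V))
    (hlam2 : lam ∈ ⋀[F]^2 (Module.Dual F V)) :
    ∃! P : ℕ → ExteriorAlgebra F (Module.Dual F V),
      P 0 = 1 ∧ (∀ k : ℕ, 1 ≤ k → P k ∈ ⋀[F]^(2 * k) (Module.Dual F V)) ∧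
        ∀ (k : ℕ) (v : V), iMul F v (P (k + 1)) = iMul F v lam * P k := by
  have h_eval := (Module.bijective_dual_eval F V).2
  have h_iff : ∀ P, (P 0 = 1 ∧ (∀ k : ℕ, 1 ≤ k → P k ∈ ⋀[F]^(2 * k) (Module.Dual F V)) ∧
      ∀ (k : ℕ) (v : V), iMul F v (P (k + 1)) = iMul F v lam * P k) ↔ IsPfaffianSeq lam P := by
    refine fun P => ⟨fun ⟨h0, hmem, hsucc⟩ => ⟨h0, fun k => ?_, fun k d => ?_⟩,
      fun hP => ⟨hP.zero, fun k _ => hP.mem k, fun k v => hP.contractLeft_succ k _⟩⟩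
    · rcases k with _ | k
      · exact h0 ▸ SetLike.one_mem_graded (fun i : ℕ => ⋀[F]^i (Module.Dual F V))
      · exact hmem _ (Nat.succ_pos k)
    · obtain ⟨v, rfl⟩ := h_eval d
      exact hsucc k v
  obtain ⟨P, hP⟩ := exists_isPfaffianSeq hlam2
  exact ⟨P, (h_iff P).2 hP, fun Q hQ => ((h_iff Q).1 hQ).unique hP⟩

/-- For a nonzero 2-form `λ` on a finite-dimensional vector space `V`
over an arbitrary field `F`, there is a unique sequence of Pfaffians
`Pf k ∈ ⋀^{2k} V*` with `Pf 0 = 1` and `ι_v (Pf (k+1)) = (ι_v λ) ∧ Pf k` for all `v ∈ V`;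
in particular for each `k ≥ 1` the element `Pf_k(λ)` exists and is unique. -/
theorem pfaffian_existence_uniqueness (F : Type*) [Field F] (V : Type*) [AddCommGroup V]
    [Module F V] [FiniteDimensional F V]
    (lam : ExteriorAlgebra F (Module.Dual F V))
    (hlam2 : lam ∈ ⋀[F]^2 (Module.Dual F V)) (hlam : lam ≠ 0) :
    ∃! P : ℕ → ExteriorAlgebra F (Module.Dual F V),
      P 0 = 1 ∧ (∀ k : ℕ, 1 ≤ k → P k ∈ ⋀[F]^(2 * k) (Module.Dual F V)) ∧
        ∀ (k : ℕ) (v : V), iMul F v (P (k + 1)) = iMul F v lam * P k :=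
  pfaffian_existence_uniqueness_general F V lam hlam2
end

section
/- For 2-forms λ₁, λ₂ on a finite-dimensional vector space V over an arbitrary field, the k-th Pfaffians satisfy the binomial-type identity Pf_k(λ₁ + λ₂) = Σ_{j=0}^{k} Pf_j(λ₁) ∧ Pf_{k-j}(λ₂). -/
open ExteriorAlgebra

set_option synthInstance.maxHeartbeats 1000000

/-!
Both sides have degree `2k`, and a form of positive degree on a finite-dimensional space is
determined by its contractions: contracting the basis vector `e_s` of the exterior algebra with the
`i`-th dual basis vector gives `± e_{s \ {i}}`, which reads off the `s`-coordinate. Contraction is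
a derivation on forms of even degree, and these commute with `1`-forms, so the contraction of the
right-hand side by `v` is `ι_v(λ₁ + λ₂)` times the right-hand side for `k - 1`. By the recursion
and induction on `k`, this is also the contraction of `Pf_k(λ₁ + λ₂)`.
-/

open CliffordAlgebra (contractLeft)
open Finset

theorem Finset.sort_erase {I : Type*} [LinearOrder I] (s : Finset I) (i : I) :
    (s.erase i).sort = s.sort.erase i := by
  have hnd : (s.sort.erase i).Nodup := (s.sort_nodup _).erase i
  rw [← (List.toFinset_sort _ hnd).mpr ((s.pairwise_sort _).sublist List.erase_sublist)]
  congr 1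
  ext j
  simp [(s.sort_nodup _).mem_erase_iff]

namespace ExteriorAlgebra

variable {R M : Type*} [CommRing R] [AddCommGroup M] [Module R M]

theorem contractLeft_ι_mul (d : Module.Dual R M) (a : M) (x : ExteriorAlgebra R M) :
    contractLeft d (ι R a * x) = d a • x - ι R a * contractLeft d x :=
  CliffordAlgebra.contractLeft_ι_mul (d := d) a x

theorem ι_mul_mem_exteriorPower_succ (a : M) {n : ℕ} {x : ExteriorAlgebra R M}
    (hx : x ∈ ⋀[R]^n M) : ι R a * x ∈ ⋀[R]^(n + 1) M := by
  rw [exteriorPower, pow_succ']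
  exact Submodule.mul_mem_mul (LinearMap.mem_range_self _ a) hx

theorem mul_ι_of_mem_exteriorPower {n : ℕ} {x : ExteriorAlgebra R M} (hx : x ∈ ⋀[R]^n M)
    (a : M) : x * ι R a = (-1 : R) ^ n • (ι R a * x) := by
  induction hx using Submodule.pow_induction_on_left' with
  | algebraMap r => simp [Algebra.commutes]
  | add x y n _ _ hx hy => simp only [add_mul, mul_add, hx, hy, smul_add]
  | mem_mul m hm n x _ ih =>
    obtain ⟨c, rfl⟩ := hm
    rw [mul_assoc, ih, mul_smul_comm, ← mul_assoc,
      ← neg_eq_of_add_eq_zero_left (ι_add_mul_swap c a), neg_mul, pow_succ, mul_neg_one, neg_smul,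
      smul_neg, mul_assoc]

theorem contractLeft_mul_of_mem_exteriorPower (d : Module.Dual R M) {n : ℕ}
    {x : ExteriorAlgebra R M} (hx : x ∈ ⋀[R]^n M) (y : ExteriorAlgebra R M) :
    contractLeft d (x * y) = contractLeft d x * y + (-1 : R) ^ n • (x * contractLeft d y) := by
  induction hx using Submodule.pow_induction_on_left' with
  | algebraMap r =>
    simp [CliffordAlgebra.contractLeft_algebraMap_mul, CliffordAlgebra.contractLeft_algebraMap,
      Algebra.smul_def]
  | add x y n _ _ hx hy => simp only [add_mul, map_add, hx, hy, smul_add]; abel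
  | mem_mul m hm n x _ ih =>
    obtain ⟨a, rfl⟩ := hm
    rw [mul_assoc, contractLeft_ι_mul, contractLeft_ι_mul, ih, pow_succ]
    simp only [mul_add, sub_mul, smul_mul_assoc, mul_smul_comm, mul_assoc, mul_neg_one, neg_smul]
    abel

theorem contractLeft_mem_exteriorPower (d : Module.Dual R M) {n : ℕ}
    {x : ExteriorAlgebra R M} (hx : x ∈ ⋀[R]^(n + 1) M) : contractLeft d x ∈ ⋀[R]^n M := by
  induction n generalizing x with
  | zero =>
    rw [exteriorPower, pow_one] at hx
    obtain ⟨a, rfl⟩ := hx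
    rw [CliffordAlgebra.contractLeft_ι, exteriorPower, pow_zero]
    exact Submodule.algebraMap_mem _
  | succ n ih =>
    rw [exteriorPower, pow_succ'] at hx
    refine Submodule.mul_induction_on hx ?_ fun x y hx hy => by rw [map_add]; exact add_mem hx hy
    rintro _ ⟨a, rfl⟩ y hy
    rw [contractLeft_ι_mul]
    exact sub_mem (Submodule.smul_mem _ _ hy) (ι_mul_mem_exteriorPower_succ a (ih hy))

@[simp]
theorem algebraMapInv_ι (a : M) : algebraMapInv (ι R a) = 0 := by
  simp [algebraMapInv]

theorem algebraMapInv_eq_zero_of_mem_exteriorPower {n : ℕ} {x : ExteriorAlgebra R M}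
    (hx : x ∈ ⋀[R]^(n + 1) M) : algebraMapInv x = 0 := by
  rw [exteriorPower, pow_succ'] at hx
  refine Submodule.mul_induction_on hx ?_ fun x y hx hy => by rw [map_add, hx, hy, add_zero]
  rintro _ ⟨a, rfl⟩ y -
  rw [map_mul, algebraMapInv_ι, zero_mul]

section Basis

variable {I : Type*} [LinearOrder I] (b : Module.Basis I R M)

theorem basis_eq_prod_sort (s : Finset I) :
    b.ExteriorAlgebra s = (s.sort.map fun i => ι R (b i)).prod := by
  rw [basis_apply_ofCard b (s_card := rfl)]
  unfold ExteriorAlgebra.ιMulti_family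
  rw [ιMulti_apply, Set.powersetCard.ofFinEmbEquiv_symm_apply]
  simp only [Function.comp_apply, Set.powersetCard.val_ofCard, orderEmbOfFin_apply]
  rw [← List.ofFn_getElem_eq_map]
  congr 1
  ext
  simp

theorem contractLeft_coord_prod_map_ι (i : I) {l : List I} (hl : l.Nodup) :
    contractLeft (b.coord i) (l.map fun j => ι R (b j)).prod =
      if i ∈ l then (-1 : R) ^ l.idxOf i • ((l.erase i).map fun j => ι R (b j)).prod else 0 := by
  induction l with
  | nil => simp [CliffordAlgebra.contractLeft_one]
  | cons j t ih =>
    obtain ⟨hjt, ht⟩ := List.nodup_cons.mp hl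
    rw [List.map_cons, List.prod_cons, contractLeft_ι_mul, ih ht, b.coord_apply, b.repr_self]
    by_cases hij : i = j
    · subst hij
      simp [hjt]
    · simp only [Finsupp.single_apply, if_neg (Ne.symm hij), zero_smul, zero_sub, List.mem_cons,
        hij, false_or]
      split_ifs
      · rw [List.erase_cons_tail (by simpa using Ne.symm hij), List.idxOf_cons_ne _ (Ne.symm hij),
          List.map_cons, List.prod_cons, mul_smul_comm, pow_succ, mul_neg_one, neg_smul]
      · rw [mul_zero, neg_zero]

theorem contractLeft_coord_basis (i : I) (s : Finset I) :
    contractLeft (b.coord i) (b.ExteriorAlgebra s) =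
      if i ∈ s then (-1 : R) ^ s.sort.idxOf i • b.ExteriorAlgebra (s.erase i) else 0 := by
  simp only [basis_eq_prod_sort, contractLeft_coord_prod_map_ι b i (s.sort_nodup _),
    sort_erase, mem_sort]

theorem basis_coord_erase_comp_contractLeft {i : I} {s : Finset I} (hi : i ∈ s) :
    b.ExteriorAlgebra.coord (s.erase i) ∘ₗ contractLeft (b.coord i) =
      (-1 : R) ^ s.sort.idxOf i • b.ExteriorAlgebra.coord s := by
  refine b.ExteriorAlgebra.ext fun t => ?_
  simp only [LinearMap.comp_apply, contractLeft_coord_basis, LinearMap.smul_apply,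
    Module.Basis.coord_apply, Module.Basis.repr_self]
  by_cases hts : t = s
  · subst hts
    simp [hi]
  split_ifs with hit
  · have : t.erase i ≠ s.erase i := fun h => hts (erase_injOn' i hit hi h)
    simp [this, hts]
  · simp [hts]

theorem basis_coord_empty :
    b.ExteriorAlgebra.coord ∅ = (algebraMapInv : ExteriorAlgebra R M →ₐ[R] R).toLinearMap := by
  refine b.ExteriorAlgebra.ext fun t => ?_
  rw [Module.Basis.coord_apply, Module.Basis.repr_self, AlgHom.toLinearMap_apply]
  obtain rfl | ht := t.eq_empty_or_nonempty
  · simp [basis_eq_prod_sort]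
  obtain ⟨n, hn⟩ := Nat.exists_eq_add_one_of_ne_zero ht.card_pos.ne'
  have hmem : b.ExteriorAlgebra t ∈ ⋀[R]^(n + 1) M := by
    rw [basis_apply_ofCard b hn, ← exteriorPower.ιMulti_family_apply_coe]
    exact Submodule.coe_mem _
  rw [algebraMapInv_eq_zero_of_mem_exteriorPower hmem, Finsupp.single_eq_of_ne ht.ne_empty.symm]

theorem eq_zero_of_contractLeft_coord_eq_zero {x : ExteriorAlgebra R M}
    (h0 : algebraMapInv x = 0) (h : ∀ i, contractLeft (b.coord i) x = 0) : x = 0 := by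
  refine b.ExteriorAlgebra.ext_elem fun s => ?_
  rw [map_zero, Finsupp.zero_apply, ← Module.Basis.coord_apply]
  obtain rfl | ⟨i, hi⟩ := s.eq_empty_or_nonempty
  · rw [basis_coord_empty]
    exact h0
  have := LinearMap.congr_fun (basis_coord_erase_comp_contractLeft b hi) x
  rw [LinearMap.comp_apply, h, map_zero, LinearMap.smul_apply, smul_eq_mul, eq_comm] at this
  exact ((isUnit_neg_one.pow _).mul_right_eq_zero).mp this

end Basis

theorem eq_of_forall_contractLeft_eq [Module.Free R M] {n : ℕ} {x y : ExteriorAlgebra R M}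
    (hx : x ∈ ⋀[R]^(n + 1) M) (hy : y ∈ ⋀[R]^(n + 1) M)
    (h : ∀ d : Module.Dual R M, contractLeft d x = contractLeft d y) : x = y := by
  let _ := IsWellOrder.linearOrder (WellOrderingRel (α := Module.Free.ChooseBasisIndex R M))
  refine sub_eq_zero.mp (eq_zero_of_contractLeft_coord_eq_zero (Module.Free.chooseBasis R M)
    (algebraMapInv_eq_zero_of_mem_exteriorPower (sub_mem hx hy)) fun i => ?_)
  rw [map_sub, h, sub_self]

section Convolution

variable {P Q : ℕ → ExteriorAlgebra R M}

theorem sum_range_mul_sub_mem_exteriorPower (hP : ∀ j, P j ∈ ⋀[R]^(2 * j) M)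
    (hQ : ∀ j, Q j ∈ ⋀[R]^(2 * j) M) (k : ℕ) :
    ∑ j ∈ range (k + 1), P j * Q (k - j) ∈ ⋀[R]^(2 * k) M := by
  refine Submodule.sum_mem _ fun j hj => ?_
  have := SetLike.mul_mem_graded (hP j) (hQ (k - j))
  rwa [← mul_add, Nat.add_sub_cancel' (mem_range_succ_iff.mp hj)] at this

theorem contractLeft_sum_range_mul_sub (d : Module.Dual R M) {a b : ExteriorAlgebra R M}
    (hP : ∀ j, P j ∈ ⋀[R]^(2 * j) M) (hb : b ∈ ⋀[R]^1 M) (hP0 : P 0 = 1) (hQ0 : Q 0 = 1)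
    (hPa : ∀ j, contractLeft d (P (j + 1)) = a * P j)
    (hQb : ∀ j, contractLeft d (Q (j + 1)) = b * Q j) (k : ℕ) :
    contractLeft d (∑ j ∈ range (k + 2), P j * Q (k + 1 - j)) =
      (a + b) * ∑ j ∈ range (k + 1), P j * Q (k - j) := by
  have hsign : ∀ j, (-1 : R) ^ (2 * j) = 1 := fun j => by rw [pow_mul, neg_one_sq, one_pow]
  have hleibniz : ∀ j m, contractLeft d (P j * Q m) =
      contractLeft d (P j) * Q m + P j * contractLeft d (Q m) := fun j m => by
    rw [contractLeft_mul_of_mem_exteriorPower d (hP j), hsign, one_smul]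
  have hcomm : ∀ j, P j * b = b * P j := fun j => by
    rw [exteriorPower, pow_one] at hb
    obtain ⟨c, rfl⟩ := hb
    rw [mul_ι_of_mem_exteriorPower (hP j), hsign, one_smul]
  rw [map_sum, sum_congr rfl fun j _ => hleibniz j _, sum_add_distrib, add_mul, mul_sum,
    mul_sum]
  congr 1
  · rw [sum_range_succ', hP0, CliffordAlgebra.contractLeft_one, zero_mul, add_zero]
    refine sum_congr rfl fun j _ => ?_
    rw [hPa, Nat.add_sub_add_right, mul_assoc]
  · rw [sum_range_succ, Nat.sub_self, hQ0, CliffordAlgebra.contractLeft_one, mul_zero, add_zero]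
    refine sum_congr rfl fun j hj => ?_
    rw [Nat.sub_add_comm (mem_range_succ_iff.mp hj), hQb, ← mul_assoc, hcomm, mul_assoc]

end Convolution

end ExteriorAlgebra

/-- The Pfaffians of 2-forms satisfy the binomial-type identity
`Pf_k(λ₁ + λ₂) = Σ_{j=0}^{k} Pf_j(λ₁) ∧ Pf_{k-j}(λ₂)`. -/
theorem pfaffian_add (F : Type*) [Field F] (V : Type*) [AddCommGroup V]
    [Module F V] [FiniteDimensional F V]
    (Pf : ExteriorAlgebra F (Module.Dual F V) → ℕ → ExteriorAlgebra F (Module.Dual F V))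
    (hPf0 : ∀ l, Pf l 0 = 1)
    (hPfmem : ∀ l ∈ ⋀[F]^2 (Module.Dual F V), ∀ k : ℕ, 1 ≤ k →
      Pf l k ∈ ⋀[F]^(2 * k) (Module.Dual F V))
    (hPf : ∀ l ∈ ⋀[F]^2 (Module.Dual F V), ∀ (k : ℕ) (v : V),
      iMul F v (Pf l (k + 1)) = iMul F v l * Pf l k)
    (l₁ l₂ : ExteriorAlgebra F (Module.Dual F V))
    (h₁ : l₁ ∈ ⋀[F]^2 (Module.Dual F V)) (h₂ : l₂ ∈ ⋀[F]^2 (Module.Dual F V)) (k : ℕ) :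
    Pf (l₁ + l₂) k = ∑ j ∈ Finset.range (k + 1), Pf l₁ j * Pf l₂ (k - j) := by
  have hdeg : ∀ l ∈ ⋀[F]^2 (Module.Dual F V), ∀ j, Pf l j ∈ ⋀[F]^(2 * j) (Module.Dual F V)
    | l, _, 0 => by rw [hPf0]; exact SetLike.one_mem_graded (fun i : ℕ => ⋀[F]^i (Module.Dual F V))
    | l, hl, j + 1 => hPfmem l hl (j + 1) j.succ_pos
  have h₁₂ := add_mem h₁ h₂
  induction k with
  | zero => simp [hPf0]
  | succ k ih =>
    refine eq_of_forall_contractLeft_eq (n := 2 * k + 1) (hdeg _ h₁₂ (k + 1))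
      (sum_range_mul_sub_mem_exteriorPower (hdeg _ h₁) (hdeg _ h₂) (k + 1)) fun d => ?_
    obtain ⟨v, rfl⟩ := (Module.evalEquiv F V).surjective d
    rw [Module.evalEquiv_apply]
    change iMul F v _ = iMul F v _
    rw [hPf _ h₁₂, ih, map_add]
    exact (contractLeft_sum_range_mul_sub _ (hdeg _ h₁)
      (contractLeft_mem_exteriorPower _ h₂) (hPf0 _) (hPf0 _) (hPf _ h₁ · v) (hPf _ h₂ · v) k).symm
end

section
/- Let ω be a nonzero alternating 2-form on F_q^m of rank 2r, viewed as a codeword of the Grassmann code C(2,m) via evaluation on Plücker coordinates of 2-planes. Then the Hamming weight of ω, i.e., the number of 2-dimensional subspaces Λ ⊆ F_q^m with ω(v_1, v_2) ≠ 0 for a basis {v_1,v_2} of Λ, equals q^{2(m-r-1)} (q^{2r} − 1)/(q^2 − 1). -/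
/-!
Double count the pairs `(v, w)` with `ω(v, w) ≠ 0`. For `v` outside the radical of `ω`, which has
dimension `m - 2r`, the map `w ↦ ω(v, w)` is a nonzero functional, so there are
`(q^m - q^(m-2r)) (q^m - q^(m-1))` such pairs. Each of them spans a plane `Λ` on which `ω` is
nonzero; an alternating form that is nonzero on a plane is nondegenerate there, so the same count
applied to `Λ` shows that each such plane carries exactly `(q^2 - 1) (q^2 - q)` pairs.
-/

open Module LinearMap
open LinearMap (BilinForm)

namespace AlternatingMap

variable {F V : Type*} [Field F] [AddCommGroup V] [Module F V]

def toBilinForm (ω : V [⋀^Fin 2]→ₗ[F] F) : BilinForm F V :=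
  mk₂ F (fun v w => ω ![v, w]) (fun _ _ _ => ω.map_vecCons_add _ _ _)
    (fun _ _ _ => ω.map_vecCons_smul _ _ _) (fun v _ _ => (ω.curryLeft v).map_vecCons_add _ _ _)
    (fun _ v _ => (ω.curryLeft v).map_vecCons_smul _ _ _)

theorem isAlt_toBilinForm (ω : V [⋀^Fin 2]→ₗ[F] F) : ω.toBilinForm.IsAlt :=
  fun v => ω.map_eq_zero_of_eq ![v, v] (i := 0) (j := 1) rfl (by decide)

end AlternatingMap

namespace LinearMap.BilinForm.IsAlt

variable {F V : Type*} [Field F] [AddCommGroup V] [Module F V] {B : BilinForm F V}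

theorem linearIndependent_of_apply_ne_zero (hB : B.IsAlt) {v w : V} (h : B v w ≠ 0) :
    LinearIndependent F ![v, w] := by
  refine LinearIndependent.pair_iff.mpr fun s t hst => ⟨?_, ?_⟩
  · simpa [hB.self_eq_zero, h] using congr(B $hst w)
  · simpa [hB.self_eq_zero, h] using congr(B v $hst)

theorem finrank_span_pair (hB : B.IsAlt) {v w : V} (h : B v w ≠ 0) :
    finrank F (Submodule.span F {v, w}) = 2 := by
  rw [← Matrix.range_cons_cons_empty v w ![],
    finrank_span_eq_card (hB.linearIndependent_of_apply_ne_zero h), Fintype.card_fin]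

variable [FiniteDimensional F V]

theorem span_pair_eq (hB : B.IsAlt) {Λ : Submodule F V} (hΛ : finrank F Λ = 2) {v w : V}
    (hv : v ∈ Λ) (hw : w ∈ Λ) (h : B v w ≠ 0) : Submodule.span F {v, w} = Λ :=
  Submodule.eq_of_le_of_finrank_eq (Submodule.span_le.mpr (Set.pair_subset hv hw))
    ((hB.finrank_span_pair h).trans hΛ.symm)

theorem ker_eq_bot_of_finrank_eq_two (hB : B.IsAlt) (hV : finrank F V = 2) (h0 : B ≠ 0) :
    ker B = ⊥ := by
  obtain ⟨v, w, h⟩ : ∃ v w, B v w ≠ 0 := by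
    by_contra! h
    exact h0 (ext₂ h)
  have hspan : Submodule.span F {v, w} = ⊤ :=
    hB.span_pair_eq (finrank_top F V ▸ hV) trivial trivial h
  refine (Submodule.eq_bot_iff _).mpr fun u hu => ?_
  have hu_span : u ∈ Submodule.span F {v, w} := hspan ▸ Submodule.mem_top
  obtain ⟨a, b, rfl⟩ := Submodule.mem_span_pair.mp hu_span
  replace hu := mem_ker.mp hu
  have ha : a = 0 := by simpa [hB.self_eq_zero, h] using congr($hu w)
  have hb : b = 0 := by simpa [hB.self_eq_zero, ← hB.neg_eq v w, h] using congr($hu v)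
  simp [ha, hb]

end LinearMap.BilinForm.IsAlt

section Counting

variable {F V : Type*} [Field F] [Fintype F] [AddCommGroup V] [Module F V] [Finite V]

local notation "q" => Fintype.card F

theorem Module.Dual.card_apply_ne_zero {f : Dual F V} (hf : f ≠ 0) :
    Nat.card {v // f v ≠ 0} = q ^ finrank F V - q ^ (finrank F V - 1) := by
  classical
  have := Fintype.ofFinite V
  have hker : finrank F (ker f) + 1 = finrank F V := f.finrank_ker_add_one_of_ne_zero hf
  rw [Nat.card_eq_fintype_card, Fintype.card_subtype_compl, card_eq_pow_finrank (K := F),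
    show Fintype.card {v // f v = 0} = Fintype.card (ker f) from rfl,
    card_eq_pow_finrank (K := F) (V := ker f), ← hker, Nat.add_sub_cancel]

namespace LinearMap.BilinForm

theorem card_pairs_apply_ne_zero (B : BilinForm F V) :
    Nat.card {p : V × V // B p.1 p.2 ≠ 0} =
      (q ^ finrank F V - q ^ finrank F (ker B)) * (q ^ finrank F V - q ^ (finrank F V - 1)) := by
  classical
  have := Fintype.ofFinite V
  have hfiber (v : V) : Nat.card {w // B v w ≠ 0} =
      if v ∈ ker B then 0 else q ^ finrank F V - q ^ (finrank F V - 1) := by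
    split_ifs with hv
    · simp [mem_ker.mp hv]
    · exact Dual.card_apply_ne_zero hv
  rw [Nat.card_congr (Equiv.subtypeProdEquivSigmaSubtype fun v w => B v w ≠ 0), Nat.card_sigma]
  simp only [hfiber, Finset.sum_ite, Finset.sum_const_zero, Finset.sum_const, zero_add,
    smul_eq_mul]
  rw [← Fintype.card_subtype, Fintype.card_subtype_compl, card_eq_pow_finrank (K := F),
    card_eq_pow_finrank (K := F) (V := ker B)]

namespace IsAlt

variable {B : BilinForm F V}

theorem card_pairs_apply_ne_zero_of_finrank_eq_two (hB : B.IsAlt) (hV : finrank F V = 2)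
    (h0 : B ≠ 0) : Nat.card {p : V × V // B p.1 p.2 ≠ 0} = (q ^ 2 - 1) * (q ^ 2 - q) := by
  rw [B.card_pairs_apply_ne_zero, hB.ker_eq_bot_of_finrank_eq_two hV h0, finrank_bot, hV]
  norm_num

theorem card_pairs_span_eq (hB : B.IsAlt) {Λ : Submodule F V} (hΛ : finrank F Λ = 2)
    (hne : ∃ v₁ ∈ Λ, ∃ v₂ ∈ Λ, B v₁ v₂ ≠ 0) :
    Nat.card {p : V × V // B p.1 p.2 ≠ 0 ∧ Submodule.span F {p.1, p.2} = Λ} =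
      (q ^ 2 - 1) * (q ^ 2 - q) := by
  obtain ⟨v₁, hv₁, v₂, hv₂, h⟩ := hne
  have hrestrict : B.restrict Λ ≠ 0 := fun h0 => h congr($h0 ⟨v₁, hv₁⟩ ⟨v₂, hv₂⟩)
  have hB_restrict : (B.restrict Λ).IsAlt := fun x => hB.self_eq_zero x
  rw [← hB_restrict.card_pairs_apply_ne_zero_of_finrank_eq_two hΛ hrestrict]
  have hmem {v w : V} (h : Submodule.span F {v, w} = Λ) : v ∈ Λ ∧ w ∈ Λ :=
    Set.pair_subset_iff.mp (Submodule.span_le.mp h.le)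
  exact Nat.card_congr
    { toFun p := ⟨(⟨p.1.1, (hmem p.2.2).1⟩, ⟨p.1.2, (hmem p.2.2).2⟩), p.2.1⟩
      invFun x := ⟨(x.1.1, x.1.2), x.2, hB.span_pair_eq hΛ x.1.1.2 x.1.2.2 x.2⟩
      left_inv _ := rfl
      right_inv _ := rfl }

theorem card_pairs_apply_ne_zero_eq_card_mul (hB : B.IsAlt) :
    Nat.card {p : V × V // B p.1 p.2 ≠ 0} =
      Nat.card {Λ : Submodule F V // finrank F Λ = 2 ∧ ∃ v₁ ∈ Λ, ∃ v₂ ∈ Λ, B v₁ v₂ ≠ 0} *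
        ((q ^ 2 - 1) * (q ^ 2 - q)) := by
  let planes := {Λ : Submodule F V // finrank F Λ = 2 ∧ ∃ v₁ ∈ Λ, ∃ v₂ ∈ Λ, B v₁ v₂ ≠ 0}
  let π (p : {p : V × V // B p.1 p.2 ≠ 0}) : planes :=
    ⟨Submodule.span F {p.1.1, p.1.2}, hB.finrank_span_pair p.2, p.1.1,
      Submodule.subset_span (by simp), p.1.2, Submodule.subset_span (by simp), p.2⟩
  have hfiber (Λ : planes) : Nat.card {p // π p = Λ} = (q ^ 2 - 1) * (q ^ 2 - q) := by
    rw [← hB.card_pairs_span_eq Λ.2.1 Λ.2.2]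
    exact Nat.card_congr
      { toFun p := ⟨p.1.1, p.1.2, congrArg Subtype.val p.2⟩
        invFun p := ⟨⟨p.1, p.2.1⟩, Subtype.ext p.2.2⟩
        left_inv _ := rfl
        right_inv _ := rfl }
  have := Fintype.ofFinite planes
  rw [← Nat.card_congr (Equiv.sigmaFiberEquiv π), Nat.card_sigma,
    Finset.sum_congr rfl fun Λ _ => hfiber Λ, Finset.sum_const, Finset.card_univ, smul_eq_mul,
    Nat.card_eq_fintype_card]

end IsAlt

end LinearMap.BilinForm

end Counting

theorem LinearMap.rank_toMatrix₂' {F : Type*} [Field F] {m n : Type*} [Fintype m] [Fintype n]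
    [DecidableEq m] [DecidableEq n] (B : (m → F) →ₗ[F] (n → F) →ₗ[F] F) :
    (toMatrix₂' F B).rank = finrank F (range B) := by
  have hB : Matrix.toLin (Pi.basisFun F m) (Pi.basisFun F n).dualBasis
      (toMatrix₂' F B).transpose = B := by
    apply (toMatrix (Pi.basisFun F m) (Pi.basisFun F n).dualBasis).injective
    rw [toMatrix_toLin]
    ext i j
    simp [toMatrix_apply, toMatrix₂'_apply]
  rw [← Matrix.rank_transpose,
    Matrix.rank_eq_finrank_range_toLin _ (Pi.basisFun F n).dualBasis (Pi.basisFun F m), hB]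

theorem Nat.pow_sub_pow_mul_pow_sub_pow_eq {q m r : ℕ} (hrm : 2 * r ≤ m) :
    (q ^ m - q ^ (m - 2 * r)) * (q ^ m - q ^ (m - 1)) =
      q ^ (2 * (m - r - 1)) * (q ^ (2 * r) - 1) * (q ^ 2 - q) := by
  rcases Nat.eq_zero_or_pos r with rfl | hr
  · simp
  have hfactor {j : ℕ} (hj : j ≤ m) : q ^ m - q ^ (m - j) = q ^ (m - j) * (q ^ j - 1) := by
    rw [Nat.mul_sub_one, ← pow_add, Nat.sub_add_cancel hj]
  have hexp : q ^ (m - 2 * r) * q ^ (m - 1) = q ^ (2 * (m - r - 1)) * q := by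
    rw [← pow_succ, ← pow_add]
    congr 1
    omega
  rw [hfactor hrm, hfactor (by omega : 1 ≤ m), pow_one, sq, ← Nat.mul_sub_one]
  calc q ^ (m - 2 * r) * (q ^ (2 * r) - 1) * (q ^ (m - 1) * (q - 1))
      = q ^ (m - 2 * r) * q ^ (m - 1) * ((q ^ (2 * r) - 1) * (q - 1)) := by ring
    _ = _ := by rw [hexp]; ring

theorem grassmann_code_two_form_weight_general (F : Type*) [Field F] [Fintype F] (q m r : ℕ)
    (hq : Fintype.card F = q)
    (ω : (Fin m → F) [⋀^Fin 2]→ₗ[F] F)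
    (hrank : (Matrix.of fun i j : Fin m => ω ![Pi.single i 1, Pi.single j 1]).rank = 2 * r) :
    Nat.card {Λ : Submodule F (Fin m → F) // Module.finrank F Λ = 2 ∧
        ∃ v₁ ∈ Λ, ∃ v₂ ∈ Λ, ω ![v₁, v₂] ≠ 0} * (q ^ 2 - 1)
      = q ^ (2 * (m - r - 1)) * (q ^ (2 * r) - 1) := by
  subst hq
  set B := ω.toBilinForm
  have hrange : finrank F (range B) = 2 * r := by
    rw [← hrank, ← rank_toMatrix₂']
    rfl
  have hrm : 2 * r ≤ m := hrange ▸ (finrank_range_le B).trans (finrank_fin_fun F).le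
  have hker : finrank F (ker B) = m - 2 * r := by
    have := B.finrank_range_add_finrank_ker
    rw [hrange, finrank_fin_fun] at this
    omega
  have hcount := ω.isAlt_toBilinForm.card_pairs_apply_ne_zero_eq_card_mul
  rw [B.card_pairs_apply_ne_zero, hker, finrank_fin_fun,
    Nat.pow_sub_pow_mul_pow_sub_pow_eq hrm] at hcount
  have hq : 0 < Fintype.card F ^ 2 - Fintype.card F :=
    Nat.sub_pos_of_lt (by nlinarith [Fintype.one_lt_card (α := F)])
  exact Nat.eq_of_mul_eq_mul_right hq (by rw [mul_assoc]; exact hcount.symm)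

/-- **Nogin.** A nonzero alternating 2-form `ω` on `F_q^m` of rank `2r`
(the rank of its matrix in the standard basis), viewed as a codeword of the Grassmann code
`C(2,m)`, has Hamming weight — the number of 2-dimensional subspaces `Λ ⊆ F_q^m` on which
`ω` restricts to a nonzero form — equal to `q^{2(m-r-1)} (q^{2r} − 1)/(q^2 − 1)`
(stated here with the exact division cleared). -/
theorem grassmann_code_two_form_weight (F : Type*) [Field F] [Fintype F] (q m r : ℕ)
    (hq : Fintype.card F = q) (hr : 1 ≤ r)
    (ω : (Fin m → F) [⋀^Fin 2]→ₗ[F] F) (hω : ω ≠ 0)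
    (hrank : (Matrix.of fun i j : Fin m => ω ![Pi.single i 1, Pi.single j 1]).rank = 2 * r) :
    Nat.card {Λ : Submodule F (Fin m → F) // Module.finrank F Λ = 2 ∧
        ∃ v₁ ∈ Λ, ∃ v₂ ∈ Λ, ω ![v₁, v₂] ≠ 0} * (q ^ 2 - 1)
      = q ^ (2 * (m - r - 1)) * (q ^ (2 * r) - 1) :=
  grassmann_code_two_form_weight_general F q m r hq ω hrank
end

section
/- Let ω be a 3-form on F_q^m whose radical ker(φ_ω) = {v : ι_v ω = 0} has dimension r, and let ω̃ be the restriction of ω to a complement W of the radical (so ω̃ is a non-degenerate 3-form on W ≅ F_q^{m-r}). Then wt(ω) = q^{3r} · wt(ω̃), where wt denotes the number of 3-dimensional subspaces on which the form is nonzero. -/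
/-!
Count the triples `v : Fin 3 → V` with `ω v ≠ 0` in two ways. Such a triple is linearly
independent, so it is an ordered basis of a 3-space `Λ` on which `ω` does not vanish; conversely,
on such a `Λ` the restriction of `ω` is a nonzero multiple of the determinant, so it is nonzero on
every ordered basis of `Λ`. Hence the count is `wt(ω)` times the number of ordered bases of `F³`.
On the other hand, `ω v` only depends on the `W`-components of the `v i`, so the count is also
`q^{3r}` times the count for `ω̃`.
-/

/-- The weight of a 3-form: the number of 3-dimensional subspaces on which it restricts to a
nonzero alternating form. -/
noncomputable def wt3 {F : Type*} [Field F] {V : Type*} [AddCommGroup V] [Module F V]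
    (ω : V [⋀^Fin 3]→ₗ[F] F) : ℕ :=
  Nat.card {Λ : Submodule F V // Module.finrank F Λ = 3 ∧
    ∃ v₁ ∈ Λ, ∃ v₂ ∈ Λ, ∃ v₃ ∈ Λ, ω ![v₁, v₂, v₃] ≠ 0}

open Module

namespace AlternatingMap

section Radical

variable {R M N : Type*} [CommRing R] [AddCommGroup M] [Module R M] [AddCommGroup N]
  [Module R N] {n : ℕ} (ω : M [⋀^Fin (n + 1)]→ₗ[R] N)

theorem map_eq_zero_of_mem_ker_curryLeft {v : Fin (n + 1) → M} {i : Fin (n + 1)}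
    (hi : v i ∈ LinearMap.ker ω.curryLeft) : ω v = 0 := by
  set u := v ∘ Equiv.swap 0 i
  have hu : ω u = 0 := by
    rw [LinearMap.mem_ker] at hi
    have h := congr($hi (Fin.tail u))
    rwa [curryLeft_apply_apply, zero_apply, show v i = u 0 by simp [u],
      show Matrix.vecCons (u 0) (Fin.tail u) = u from Fin.cons_self_tail u] at h
  have hv : u ∘ Equiv.swap 0 i = v := by ext j; simp [u]
  rw [← hv, map_perm, hu, smul_zero]

theorem map_add_of_forall_mem_ker_curryLeft (v k : Fin (n + 1) → M)
    (hk : ∀ i, k i ∈ LinearMap.ker ω.curryLeft) : ω (v + k) = ω v := by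
  classical
  -- expanding multilinearly, every term but `ω v` has some `k i` as an argument
  rw [map_add_univ, Finset.sum_eq_single Finset.univ]
  · simp
  · intro s _ hs
    obtain ⟨i, hi⟩ : ∃ i, i ∉ s := by
      by_contra! h
      exact hs (Finset.eq_univ_iff_forall.mpr h)
    exact ω.map_eq_zero_of_mem_ker_curryLeft (i := i) (by simpa [hi] using hk i)
  · simp

theorem natCard_map_ne_zero_of_isCompl_ker_curryLeft {W : Submodule R M}
    (hW : IsCompl (LinearMap.ker ω.curryLeft) W) :
    Nat.card {v : Fin (n + 1) → M // ω v ≠ 0} =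
      Nat.card {w : Fin (n + 1) → W // ω.compLinearMap W.subtype w ≠ 0} *
        Nat.card (LinearMap.ker ω.curryLeft) ^ (n + 1) := by
  set K := LinearMap.ker ω.curryLeft
  let split : (Fin (n + 1) → M) ≃ (Fin (n + 1) → W) × (Fin (n + 1) → K) :=
    (Equiv.piCongrRight fun _ ↦ (Submodule.prodEquivOfIsCompl W K hW.symm).symm.toEquiv).trans
      (Equiv.arrowProdEquivProdArrow _ _ _)
  have hsplit (v) : ω v = ω.compLinearMap W.subtype (split v).1 := by
    conv_lhs => rw [← split.symm_apply_apply v]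
    exact ω.map_add_of_forall_mem_ker_curryLeft _ _ fun i ↦ ((split v).2 i).2
  calc Nat.card {v : Fin (n + 1) → M // ω v ≠ 0}
      = Nat.card {x : (Fin (n + 1) → W) × (Fin (n + 1) → K) //
          ω.compLinearMap W.subtype x.1 ≠ 0} :=
        Nat.card_congr (split.subtypeEquiv fun v ↦ by rw [hsplit])
    _ = _ := by
        rw [Nat.card_congr (Equiv.prodSubtypeFstEquivSubtypeProd
          (p := fun w ↦ ω.compLinearMap W.subtype w ≠ 0)), Nat.card_prod, Nat.card_fun,
          Nat.card_fin]

end Radical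

section FiniteField

variable {F V : Type*} [Field F] [AddCommGroup V] [Module F V]

theorem map_ne_zero_of_linearIndependent [FiniteDimensional F V] {ι : Type*} [Fintype ι]
    {ω : V [⋀^ι]→ₗ[F] F} (hω : ω ≠ 0) {u : ι → V} (hu : LinearIndependent F u)
    (hι : Fintype.card ι = finrank F V) : ω u ≠ 0 := by
  simpa using (ω.map_basis_ne_zero_iff (basisOfLinearIndependentOfCardEqFinrank' u hu hι)).mpr hω

variable [Fintype F] [Finite V] {n : ℕ}

theorem natCard_map_ne_zero_eq_mul_prod (ω : V [⋀^Fin n]→ₗ[F] F) :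
    Nat.card {v : Fin n → V // ω v ≠ 0} =
      Nat.card {Λ : Submodule F V // finrank F Λ = n ∧ ω.compLinearMap Λ.subtype ≠ 0} *
        ∏ i : Fin n, (Fintype.card F ^ n - Fintype.card F ^ (i : ℕ)) := by
  classical
  set S := {Λ : Submodule F V // finrank F Λ = n ∧ ω.compLinearMap Λ.subtype ≠ 0}
  have li (v : {v : Fin n → V // ω v ≠ 0}) : LinearIndependent F v.1 :=
    not_imp_comm.mp (ω.map_linearDependent v.1) v.2
  let Φ (v : {v : Fin n → V // ω v ≠ 0}) : S :=
    ⟨Submodule.span F (Set.range v.1), by simpa using finrank_span_eq_card (li v), fun h ↦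
      v.2 (by simpa using congr($h fun i ↦ ⟨v.1 i, Submodule.subset_span ⟨i, rfl⟩⟩))⟩
  have span_eq (Λ : S) (u : {u : Fin n → Λ.1 // LinearIndependent F u}) :
      Submodule.span F (Set.range (Λ.1.subtype ∘ u.1)) = Λ.1 := by
    rw [Set.range_comp, Submodule.span_image,
      u.2.span_eq_top_of_card_eq_finrank' (by simp [Λ.2.1]), Submodule.map_subtype_top]
  have fiber (Λ : S) : {v // Φ v = Λ} ≃ {u : Fin n → Λ.1 // LinearIndependent F u} :=
    { toFun v := ⟨fun i ↦ ⟨v.1.1 i, by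
          rw [← congrArg Subtype.val v.2]; exact Submodule.subset_span ⟨i, rfl⟩⟩,
        LinearIndependent.of_comp Λ.1.subtype (li v.1)⟩
      invFun u := ⟨⟨Λ.1.subtype ∘ u.1,
          map_ne_zero_of_linearIndependent Λ.2.2 u.2 (by simp [Λ.2.1])⟩,
        Subtype.ext (span_eq Λ u)⟩
      left_inv v := rfl
      right_inv u := rfl }
  have : Fintype S := Fintype.ofFinite _
  calc Nat.card {v : Fin n → V // ω v ≠ 0}
      = Nat.card (Σ Λ, {v // Φ v = Λ}) := Nat.card_congr (Equiv.sigmaFiberEquiv Φ).symm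
    _ = ∑ Λ : S, Nat.card {u : Fin n → Λ.1 // LinearIndependent F u} := by
        rw [Nat.card_sigma]
        exact Finset.sum_congr rfl fun Λ _ ↦ Nat.card_congr (fiber Λ)
    _ = ∑ _Λ : S, ∏ i : Fin n, (Fintype.card F ^ n - Fintype.card F ^ (i : ℕ)) :=
        Finset.sum_congr rfl fun Λ _ ↦ by rw [card_linearIndependent Λ.2.1.ge, Λ.2.1]
    _ = _ := by rw [Finset.sum_const, Finset.card_univ, smul_eq_mul, Nat.card_eq_fintype_card]

end FiniteField

end AlternatingMap

theorem wt3_eq_natCard {F V : Type*} [Field F] [AddCommGroup V] [Module F V]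
    (ω : V [⋀^Fin 3]→ₗ[F] F) :
    wt3 ω =
      Nat.card {Λ : Submodule F V // finrank F Λ = 3 ∧ ω.compLinearMap Λ.subtype ≠ 0} := by
  refine Nat.card_congr (Equiv.subtypeEquivRight fun Λ ↦ and_congr_right fun _ ↦ ?_)
  constructor
  · rintro ⟨v₁, h₁, v₂, h₂, v₃, h₃, hv⟩ hΛ
    have h := congr($hΛ ![⟨v₁, h₁⟩, ⟨v₂, h₂⟩, ⟨v₃, h₃⟩])
    rw [AlternatingMap.compLinearMap_apply, AlternatingMap.zero_apply] at h
    exact hv (by convert h using 2; ext i; fin_cases i <;> rfl)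
  · intro hΛ
    obtain ⟨u, hu⟩ : ∃ u, ω.compLinearMap Λ.subtype u ≠ 0 := by
      by_contra! h
      exact hΛ (AlternatingMap.ext h)
    refine ⟨u 0, (u 0).2, u 1, (u 1).2, u 2, (u 2).2, ?_⟩
    rw [AlternatingMap.compLinearMap_apply] at hu
    convert hu using 2
    ext i; fin_cases i <;> rfl

/-- If the radical `{v : ι_v ω = 0}` of a 3-form `ω` on `F_q^m` has
dimension `r`, and `ω̃` is the restriction of `ω` to a complement `W` of the radical, then
`wt(ω) = q^{3r} · wt(ω̃)`. -/
theorem degenerate_three_form_weight (F : Type*) [Field F] [Fintype F] (q m r : ℕ)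
    (hq : Fintype.card F = q)
    (ω : (Fin m → F) [⋀^Fin 3]→ₗ[F] F)
    (hr : Module.finrank F (LinearMap.ker ω.curryLeft) = r)
    (W : Submodule F (Fin m → F))
    (hW : IsCompl (LinearMap.ker ω.curryLeft) W) :
    wt3 ω = q ^ (3 * r) * wt3 (ω.compLinearMap W.subtype) := by
  subst hq
  have hbases : ∏ i : Fin 3, (Fintype.card F ^ 3 - Fintype.card F ^ (i : ℕ)) ≠ 0 :=
    Finset.prod_ne_zero_iff.mpr fun i _ ↦
      Nat.sub_ne_zero_of_lt (Nat.pow_lt_pow_right Fintype.one_lt_card i.2)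
  have hK : Nat.card (LinearMap.ker ω.curryLeft) = Fintype.card F ^ r := by
    rw [Module.natCard_eq_pow_finrank (K := F), Nat.card_eq_fintype_card, hr]
  have hcount := ω.natCard_map_ne_zero_of_isCompl_ker_curryLeft hW
  rw [ω.natCard_map_ne_zero_eq_mul_prod,
    (ω.compLinearMap W.subtype).natCard_map_ne_zero_eq_mul_prod, hK,
    ← wt3_eq_natCard, ← wt3_eq_natCard] at hcount
  refine Nat.eq_of_mul_eq_mul_right (Nat.pos_of_ne_zero hbases) ?_
  rw [hcount]
  ring
end

section
/- Let ω_10 = e^{123} + e^{456} + e^7 ∧ (e^{14} + e^{25} + e^{36}) on F_q^7. Then X_1(ω_10) = P{x ≠ 0 : Pf_2(ι_x ω_10) = 0} is empty. -/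
open ExteriorAlgebra
open scoped LinearAlgebra.Projectivization

set_option synthInstance.maxHeartbeats 1000000
set_option maxHeartbeats 2000000

/-- The basic 1-form `e^i` (the `i`-th coordinate functional) as an element of the exterior
algebra of the dual space of `Fin n → F`. -/
noncomputable def ee (F : Type*) [Field F] {n : ℕ} (i : Fin n) :
    ExteriorAlgebra F (Module.Dual F (Fin n → F)) :=
  ExteriorAlgebra.ι F (LinearMap.proj i)

/-!
Contracting the Pfaffian recursion `ι_v Pf_{k+1}(l) = ι_v l ∧ Pf_k(l)` four times shows that
`ι_d ι_c ι_b ι_a Pf_2(l)` is the Pfaffian of the `4 × 4` matrix `l(x, y)`,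
`x, y ∈ {a, b, c, d}`. For `l = ι_x ω₁₀` and suitable quadruples of basis vectors these
Pfaffians are `x_1², …, x_6²` and `x_7² - x_3 x_6`, so `Pf_2(ι_x ω₁₀) = 0` forces `x = 0`.
-/

section Contraction

variable {F : Type*} [Field F] {V : Type*} [AddCommGroup V] [Module F V]

theorem iMul_ι (v : V) (φ : Module.Dual F V) : iMul F v (ι F φ) = algebraMap F _ (φ v) :=
  CliffordAlgebra.contractLeft_ι _ _ _

theorem iMul_ι_mul (v : V) (φ : Module.Dual F V) (x : ExteriorAlgebra F (Module.Dual F V)) :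
    iMul F v (ι F φ * x) = φ v • x - ι F φ * iMul F v x :=
  CliffordAlgebra.contractLeft_ι_mul _ _ _

def pfaffianMinor (φ : V → Module.Dual F V) (a b c d : V) : F :=
  φ a b * φ c d - φ a c * φ b d + φ b c * φ a d

theorem iMul_iMul_iMul_iMul_two_eq_pfaffianMinor {l : ExteriorAlgebra F (Module.Dual F V)}
    {P : ℕ → ExteriorAlgebra F (Module.Dual F V)} (hP0 : P 0 = 1)
    (hP : ∀ (k : ℕ) (v : V), iMul F v (P (k + 1)) = iMul F v l * P k)
    {φ : V → Module.Dual F V} (hφ : ∀ a, iMul F a l = ι F (φ a)) (a b c d : V) :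
    iMul F d (iMul F c (iMul F b (iMul F a (P 2)))) =
      algebraMap F _ (pfaffianMinor φ a b c d) := by
  have hP1 : ∀ w, iMul F w (P 1) = ι F (φ w) := fun w => by rw [hP, hP0, mul_one, hφ]
  rw [hP, hφ, iMul_ι_mul, hP1, map_sub, map_smul, hP1, iMul_ι_mul, iMul_ι, ← Algebra.commutes,
    ← Algebra.smul_def]
  simp only [map_sub, map_smul, iMul_ι, pfaffianMinor, Algebra.algebraMap_eq_smul_one]
  module

end Contraction

section Coordinates

variable {F : Type*} [Field F] {n : ℕ}

theorem ee_mem (i : Fin n) : ee F i ∈ ⋀[F]^1 (Module.Dual F (Fin n → F)) := by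
  simpa only [exteriorPower, pow_one, ee] using LinearMap.mem_range_self _ _

theorem ee_mul_ee_mem (i j : Fin n) : ee F i * ee F j ∈ ⋀[F]^2 (Module.Dual F (Fin n → F)) :=
  SetLike.mul_mem_graded (ee_mem i) (ee_mem j)

theorem iMul_ee_mul (v : Fin n → F) (i : Fin n)
    (x : ExteriorAlgebra F (Module.Dual F (Fin n → F))) :
    iMul F v (ee F i * x) = v i • x - ee F i * iMul F v x :=
  iMul_ι_mul _ _ _

theorem iMul_ee_mul_ee (v : Fin n → F) (i j : Fin n) :
    iMul F v (ee F i * ee F j) = v i • ee F j - v j • ee F i := by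
  rw [iMul_ee_mul, ee, iMul_ι, ← Algebra.commutes, ← Algebra.smul_def]
  rfl

theorem iMul_ee_mul_ee_mul_ee (v : Fin n → F) (i j k : Fin n) :
    iMul F v (ee F i * ee F j * ee F k) =
      v i • (ee F j * ee F k) - v j • (ee F i * ee F k) + v k • (ee F i * ee F j) := by
  rw [mul_assoc, iMul_ee_mul, iMul_ee_mul_ee, mul_sub, mul_smul_comm, mul_smul_comm]
  abel

/-- `c ↦` the `3 × 3` minor of the rows `a, b, c` in the columns `i, j, k`. -/
def minorForm (a b : Fin n → F) (i j k : Fin n) : Module.Dual F (Fin n → F) :=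
  (a i * b j - a j * b i) • LinearMap.proj k - (a i * b k - a k * b i) • LinearMap.proj j
    + (a j * b k - a k * b j) • LinearMap.proj i

theorem iMul_iMul_ee_mul_ee_mul_ee (a b : Fin n → F) (i j k : Fin n) :
    iMul F b (iMul F a (ee F i * ee F j * ee F k)) = ι F (minorForm a b i j k) := by
  rw [iMul_ee_mul_ee_mul_ee]
  simp only [map_add, map_sub, map_smul, iMul_ee_mul_ee]
  simp only [minorForm, ee, map_add, map_sub, map_smul]
  module

end Coordinates

noncomputable def omega10 (F : Type*) [Field F] : ExteriorAlgebra F (Module.Dual F (Fin 7 → F)) :=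
  ee F 0 * ee F 1 * ee F 2 + ee F 3 * ee F 4 * ee F 5 + ee F 6 * ee F 0 * ee F 3
    + ee F 6 * ee F 1 * ee F 4 + ee F 6 * ee F 2 * ee F 5

section Omega10

variable {F : Type*} [Field F]

def omega10Form (a b : Fin 7 → F) : Module.Dual F (Fin 7 → F) :=
  minorForm a b 0 1 2 + minorForm a b 3 4 5 + minorForm a b 6 0 3 + minorForm a b 6 1 4
    + minorForm a b 6 2 5

theorem iMul_omega10_mem (v : Fin 7 → F) :
    iMul F v (omega10 F) ∈ ⋀[F]^2 (Module.Dual F (Fin 7 → F)) := by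
  simp only [omega10, map_add, iMul_ee_mul_ee_mul_ee]
  repeat
    first
    | exact Submodule.smul_mem _ _ (ee_mul_ee_mem _ _)
    | apply Submodule.add_mem
    | apply Submodule.sub_mem

theorem iMul_iMul_omega10 (a b : Fin 7 → F) :
    iMul F b (iMul F a (omega10 F)) = ι F (omega10Form a b) := by
  simp only [omega10, omega10Form, map_add, iMul_iMul_ee_mul_ee_mul_ee]

theorem eq_zero_of_forall_pfaffianMinor_omega10Form_eq_zero {v : Fin 7 → F}
    (h : ∀ a b c d, pfaffianMinor (omega10Form v) a b c d = 0) : v = 0 := by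
  have minor (a b c d : Fin 7) := h (Pi.single a 1) (Pi.single b 1) (Pi.single c 1) (Pi.single d 1)
  simp only [pfaffianMinor, omega10Form, minorForm, LinearMap.add_apply, LinearMap.sub_apply,
    LinearMap.smul_apply, LinearMap.proj_apply, Pi.single_apply] at minor
  -- `0`-based indices: `minor 3 6 1 2` is the coefficient of `e^{4723}`, namely `v 0 ^ 2`;
  -- the last one, on `e^{1425}`, is `v 6 ^ 2 - v 2 * v 5`.
  have h0 : v 0 = 0 := by simpa using minor 3 6 1 2
  have h1 : v 1 = 0 := by simpa using minor 4 6 2 0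
  have h2 : v 2 = 0 := by simpa using minor 5 6 0 1
  have h3 : v 3 = 0 := by simpa using minor 6 0 4 5
  have h4 : v 4 = 0 := by simpa using minor 6 1 5 3
  have h5 : v 5 = 0 := by simpa using minor 6 2 3 4
  have h6 : v 6 = 0 := by simpa [h2] using minor 0 3 1 4
  funext i
  fin_cases i <;> assumption

end Omega10

theorem X1_omega10_general (F : Type*) [Field F]
    (Pf : ExteriorAlgebra F (Module.Dual F (Fin 7 → F)) → ℕ →
      ExteriorAlgebra F (Module.Dual F (Fin 7 → F)))
    (hPf0 : ∀ l, Pf l 0 = 1)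
    (hPf : ∀ l ∈ ⋀[F]^2 (Module.Dual F (Fin 7 → F)), ∀ (k : ℕ) (v : Fin 7 → F),
      iMul F v (Pf l (k + 1)) = iMul F v l * Pf l k)
    (ω : ExteriorAlgebra F (Module.Dual F (Fin 7 → F)))
    (hω : ω = ee F 0 * ee F 1 * ee F 2 + ee F 3 * ee F 4 * ee F 5
      + ee F 6 * (ee F 0 * ee F 3 + ee F 1 * ee F 4 + ee F 2 * ee F 5)) :
    {p : ℙ F (Fin 7 → F) | ∃ v, ∃ hv : v ≠ 0, p = Projectivization.mk F v hv ∧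
      Pf (iMul F v ω) 2 = 0} = ∅ := by
  have hω10 : ω = omega10 F := by rw [hω, omega10]; simp only [mul_add, mul_assoc, add_assoc]
  subst hω10
  refine Set.eq_empty_iff_forall_notMem.2 ?_
  rintro - ⟨v, hv, -, hPf2⟩
  refine hv (eq_zero_of_forall_pfaffianMinor_omega10Form_eq_zero fun a b c d => ?_)
  have hminor := iMul_iMul_iMul_iMul_two_eq_pfaffianMinor (hPf0 _) (hPf _ (iMul_omega10_mem v))
    (iMul_iMul_omega10 v) a b c d
  rwa [hPf2, map_zero, map_zero, map_zero, map_zero, eq_comm, algebraMap_eq_zero_iff] at hminor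

/-- For `ω₁₀ = e¹²³ + e⁴⁵⁶ + e⁷ ∧ (e¹⁴ + e²⁵ + e³⁶)` on `F_q^7`, the
weight variety `X₁(ω₁₀) = P{x ≠ 0 : Pf₂(ι_x ω₁₀) = 0}` is empty. -/
theorem X1_omega10 (F : Type*) [Field F] [Fintype F] (q : ℕ) (hq : Fintype.card F = q)
    (Pf : ExteriorAlgebra F (Module.Dual F (Fin 7 → F)) → ℕ →
      ExteriorAlgebra F (Module.Dual F (Fin 7 → F)))
    (hPf0 : ∀ l, Pf l 0 = 1)
    (hPfmem : ∀ l ∈ ⋀[F]^2 (Module.Dual F (Fin 7 → F)), ∀ k : ℕ, 1 ≤ k →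
      Pf l k ∈ ⋀[F]^(2 * k) (Module.Dual F (Fin 7 → F)))
    (hPf : ∀ l ∈ ⋀[F]^2 (Module.Dual F (Fin 7 → F)), ∀ (k : ℕ) (v : Fin 7 → F),
      iMul F v (Pf l (k + 1)) = iMul F v l * Pf l k)
    (ω : ExteriorAlgebra F (Module.Dual F (Fin 7 → F)))
    (hω : ω = ee F 0 * ee F 1 * ee F 2 + ee F 3 * ee F 4 * ee F 5
      + ee F 6 * (ee F 0 * ee F 3 + ee F 1 * ee F 4 + ee F 2 * ee F 5)) :
    {p : ℙ F (Fin 7 → F) | ∃ v, ∃ hv : v ≠ 0, p = Projectivization.mk F v hv ∧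
      Pf (iMul F v ω) 2 = 0} = ∅ :=
  X1_omega10_general F Pf hPf0 hPf ω hω
end
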